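/- arXiv:0909.2088 — 7 statements merged into one kernel-verified Lean document; each statement's English description precedes it below -/
import Mathlib

section
/- In any inversive arithmetical meadow with zero, 0⁻¹ = 0. -/
structure IAMeadowZero (M : Type*) where
  add : M → M → M
  mul : M → M → M
  zero : M
  one : M
  inv : M → M
  add_assoc : ∀ x y z, add (add x y) z = add x (add y z)
  add_comm : ∀ x y, add x y = add y x
  add_zero : ∀ x, add x zero = x
  mul_assoc : ∀ x y z, mul (mul x y) z = mul x (mul y z)
  mul_comm : ∀ x y, mul x y = mul y x
  mul_one : ∀ x, mul x one = x
  mul_add : ∀ x y z, mul x (add y z) = add (mul x y) (mul x z)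
  inv_inv : ∀ x, inv (inv x) = x
  mul_mul_inv : ∀ x, mul x (mul x (inv x)) = x

/-!
`0` is idempotent, since `0 = 0 * (1 + 0) = 0 + 0 * 0`, and the law `x * (x * x⁻¹) = x`
forces every idempotent to be its own inverse.
-/

namespace IAMeadowZero

variable {M : Type*} (A : IAMeadowZero M)

theorem zero_mul_zero : A.mul A.zero A.zero = A.zero := by
  have h := A.mul_add A.zero A.one A.zero
  rw [A.add_zero, A.mul_one, A.add_comm, A.add_zero] at h
  exact h.symm

theorem mul_inv_eq_self_of_mul_self {x : M} (hx : A.mul x x = x) :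
    A.mul x (A.inv x) = x :=
  calc A.mul x (A.inv x) = A.mul (A.mul x x) (A.inv x) := by rw [hx]
    _ = x := by rw [A.mul_assoc, A.mul_mul_inv]

theorem inv_eq_self_of_mul_inv_eq_self {x : M} (hx : A.mul x (A.inv x) = x) :
    A.inv x = x := by
  have hx' : A.mul (A.inv x) x = x := by rw [A.mul_comm, hx]
  calc A.inv x = A.mul (A.inv x) (A.mul (A.inv x) (A.inv (A.inv x))) := (A.mul_mul_inv _).symm
    _ = x := by rw [A.inv_inv, hx', hx']

theorem inv_eq_self_of_mul_self {x : M} (hx : A.mul x x = x) : A.inv x = x :=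
  A.inv_eq_self_of_mul_inv_eq_self (A.mul_inv_eq_self_of_mul_self hx)

end IAMeadowZero

theorem inv_zero_eq_zero {M : Type*} (A : IAMeadowZero M) :
    A.inv A.zero = A.zero :=
  A.inv_eq_self_of_mul_self A.zero_mul_zero
end

section
/- In any inversive arithmetical meadow with zero, the inverse is multiplicative: (x·y)⁻¹ = x⁻¹·y⁻¹ for all x, y. -/
section PseudoInverse

variable {S : Type*}

def IsPseudoInverse [Mul S] (x a : S) : Prop :=
  x * a * x = x ∧ a * x * a = a

variable [CommSemigroup S]

theorem IsPseudoInverse.mul {x y a b : S} (ha : IsPseudoInverse x a) (hb : IsPseudoInverse y b) :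
    IsPseudoInverse (x * y) (a * b) := by
  constructor
  · calc x * y * (a * b) * (x * y) = (x * a * x) * (y * b * y) := by ac_rfl
      _ = x * y := by rw [ha.1, hb.1]
  · calc a * b * (x * y) * (a * b) = (a * x * a) * (b * y * b) := by ac_rfl
      _ = a * b := by rw [ha.2, hb.2]

theorem IsPseudoInverse.eq_mul_mul {x a b : S} (ha : IsPseudoInverse x a)
    (hb : IsPseudoInverse x b) : a = b * (x * a) :=
  calc a = a * x * a := ha.2.symm
    _ = a * (x * b * x) * a := by rw [hb.1]
    _ = b * (x * (a * x * a)) := by ac_rfl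
    _ = b * (x * a) := by rw [ha.2]

theorem IsPseudoInverse.unique {x a b : S} (ha : IsPseudoInverse x a)
    (hb : IsPseudoInverse x b) : a = b :=
  calc a = b * (x * a) := ha.eq_mul_mul hb
    _ = a * (x * b) := by ac_rfl
    _ = b := (hb.eq_mul_mul ha).symm

end PseudoInverse

namespace IAMeadowZero

variable {M : Type*} (A : IAMeadowZero M)

abbrev toCommSemigroup : CommSemigroup M where
  mul := A.mul
  mul_assoc := A.mul_assoc
  mul_comm := A.mul_comm

theorem isPseudoInverse_inv (x : M) :
    letI := A.toCommSemigroup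
    IsPseudoInverse x (A.inv x) := by
  let := A.toCommSemigroup
  have inv_mul_mul_inv : A.inv x * (A.inv x * x) = A.inv x := by
    have h := A.mul_mul_inv (A.inv x)
    rwa [A.inv_inv] at h
  constructor
  · calc x * A.inv x * x = x * (x * A.inv x) := by ac_rfl
      _ = x := A.mul_mul_inv x
  · calc A.inv x * x * A.inv x = A.inv x * (A.inv x * x) := by ac_rfl
      _ = A.inv x := inv_mul_mul_inv

end IAMeadowZero

theorem inv_mul_distrib_zero {M : Type*} (A : IAMeadowZero M) (x y : M) :
    A.inv (A.mul x y) = A.mul (A.inv x) (A.inv y) :=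
  letI := A.toCommSemigroup
  (A.isPseudoInverse_inv (x * y)).unique ((A.isPseudoInverse_inv x).mul (A.isPseudoInverse_inv y))
end

section
/- In any inversive arithmetical meadow with zero satisfying (1+x²+y²)·(1+x²+y²)⁻¹ = 1 for all x, y, every numeral n̲ (n ≥ 1) has a multiplicative inverse, i.e. n̲ · n̲⁻¹ = 1. -/
def IAMeadowZero.numeral {M : Type*} (A : IAMeadowZero M) : ℕ → M
  | 0 => A.one
  | 1 => A.one
  | n + 2 => A.add (A.numeral (n + 1)) A.one

theorem Nat.Prime.exists_dvd_one_add_mul_self_add_mul_self {p : ℕ} (hp : p.Prime) :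
    ∃ a b : ℕ, 1 ≤ a ∧ 1 ≤ b ∧ p ∣ 1 + a * a + b * b := by
  have := Fact.mk hp
  obtain ⟨x, y, hxy⟩ := ZMod.sq_add_sq p (-1)
  -- shifting by `p` keeps the residues and makes both numbers positive
  have hp₁ : ∀ n, 1 ≤ n + p := fun n ↦ hp.one_le.trans (Nat.le_add_left p n)
  refine ⟨x.val + p, y.val + p, hp₁ _, hp₁ _, (ZMod.natCast_eq_zero_iff _ _).mp ?_⟩
  push_cast [ZMod.natCast_self, ZMod.natCast_val, ZMod.cast_id]
  linear_combination hxy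

namespace IAMeadowZero

variable {M : Type*} (A : IAMeadowZero M)

def IsInvertible (x : M) : Prop := A.mul x (A.inv x) = A.one

theorem mul_left_comm (x y z : M) : A.mul x (A.mul y z) = A.mul y (A.mul x z) := by
  rw [← A.mul_assoc, A.mul_comm x y, A.mul_assoc]

variable {A}

theorem isInvertible_of_mul_eq_one {x z : M} (h : A.mul x z = A.one) : A.IsInvertible x :=
  calc A.mul x (A.inv x) = A.mul (A.mul x (A.inv x)) (A.mul x z) := by rw [h, A.mul_one]
    _ = A.mul (A.mul x (A.mul x (A.inv x))) z := by simp only [A.mul_assoc, A.mul_left_comm]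
    _ = A.one := by rw [A.mul_mul_inv, h]

theorem IsInvertible.mul {x y : M} (hx : A.IsInvertible x) (hy : A.IsInvertible y) :
    A.IsInvertible (A.mul x y) :=
  isInvertible_of_mul_eq_one (z := A.mul (A.inv x) (A.inv y)) <| by
    rw [A.mul_assoc, A.mul_left_comm y, ← A.mul_assoc, hx, hy, A.mul_one]

theorem IsInvertible.of_mul_left {x y : M} (h : A.IsInvertible (A.mul x y)) :
    A.IsInvertible x :=
  isInvertible_of_mul_eq_one (z := A.mul y (A.inv (A.mul x y))) <| by rw [← A.mul_assoc, h]

theorem isInvertible_one : A.IsInvertible A.one :=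
  isInvertible_of_mul_eq_one (A.mul_one A.one)

variable (A)

theorem numeral_succ {n : ℕ} (hn : 1 ≤ n) : A.numeral (n + 1) = A.add (A.numeral n) A.one := by
  obtain ⟨m, rfl⟩ := Nat.exists_eq_add_of_le' hn
  rfl

theorem numeral_add {a b : ℕ} (ha : 1 ≤ a) (hb : 1 ≤ b) :
    A.numeral (a + b) = A.add (A.numeral a) (A.numeral b) := by
  induction b, hb using Nat.le_induction with
  | base => exact A.numeral_succ ha
  | succ b hb ih =>
    rw [← Nat.add_assoc, A.numeral_succ (by omega), ih, A.numeral_succ hb, A.add_assoc]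

theorem numeral_mul {a b : ℕ} (ha : 1 ≤ a) (hb : 1 ≤ b) :
    A.numeral (a * b) = A.mul (A.numeral a) (A.numeral b) := by
  induction b, hb using Nat.le_induction with
  | base => rw [Nat.mul_one]; exact (A.mul_one _).symm
  | succ b hb ih =>
    rw [Nat.mul_succ, A.numeral_add (Nat.mul_pos ha hb) ha, ih, A.numeral_succ hb, A.mul_add,
      A.mul_one]

variable {A}

theorem isInvertible_numeral_mul {a b : ℕ} (ha : A.IsInvertible (A.numeral a))
    (hb : A.IsInvertible (A.numeral b)) : A.IsInvertible (A.numeral (a * b)) := by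
  rcases Nat.eq_zero_or_pos a with rfl | ha₀
  · rwa [Nat.zero_mul]
  rcases Nat.eq_zero_or_pos b with rfl | hb₀
  · rwa [Nat.mul_zero]
  rw [A.numeral_mul ha₀ hb₀]
  exact ha.mul hb

theorem isInvertible_numeral_of_dvd
    (H : ∀ x y, A.IsInvertible (A.add A.one (A.add (A.mul x x) (A.mul y y))))
    {k a b : ℕ} (hk : 1 ≤ k) (ha : 1 ≤ a) (hb : 1 ≤ b) (hdvd : k ∣ 1 + a * a + b * b) :
    A.IsInvertible (A.numeral k) := by
  obtain ⟨m, hm⟩ := hdvd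
  have hm₀ : 1 ≤ m := Nat.pos_of_mul_pos_left (by omega : 0 < k * m)
  have hsum : A.numeral (1 + a * a + b * b) = A.add A.one
      (A.add (A.mul (A.numeral a) (A.numeral a)) (A.mul (A.numeral b) (A.numeral b))) := by
    have haa := Nat.mul_pos ha ha
    have hbb := Nat.mul_pos hb hb
    rw [Nat.add_assoc, A.numeral_add le_rfl (by omega), A.numeral_add haa hbb,
      A.numeral_mul ha ha, A.numeral_mul hb hb]
    rfl
  have hprod := H (A.numeral a) (A.numeral b)
  rw [← hsum, hm, A.numeral_mul hk hm₀] at hprod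
  exact hprod.of_mul_left

end IAMeadowZero

open IAMeadowZero in
theorem numeral_mul_inv_general {M : Type*} (A : IAMeadowZero M)
    (H : ∀ x y, A.mul (A.add A.one (A.add (A.mul x x) (A.mul y y)))
        (A.inv (A.add A.one (A.add (A.mul x x) (A.mul y y)))) = A.one)
    (n : ℕ) :
    A.mul (A.numeral n) (A.inv (A.numeral n)) = A.one := by
  show A.IsInvertible (A.numeral n)
  induction n using induction_on_primes with
  | zero | one => exact isInvertible_one
  | prime_mul p n hp ih =>
    obtain ⟨a, b, ha, hb, hdvd⟩ := hp.exists_dvd_one_add_mul_self_add_mul_self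
    exact isInvertible_numeral_mul (isInvertible_numeral_of_dvd H hp.one_le ha hb hdvd) ih

theorem numeral_mul_inv {M : Type*} (A : IAMeadowZero M)
    (H : ∀ x y, A.mul (A.add A.one (A.add (A.mul x x) (A.mul y y)))
        (A.inv (A.add A.one (A.add (A.mul x x) (A.mul y y)))) = A.one)
    (n : ℕ) (hn : 1 ≤ n) :
    A.mul (A.numeral n) (A.inv (A.numeral n)) = A.one :=
  numeral_mul_inv_general A H n
end

section
/- The non-negative rational numbers, with the usual addition, multiplication, constants 0 and 1, and zero-totalized multiplicative inverse (0⁻¹ = 0), form an inversive arithmetical meadow with zero, and moreover satisfy (1+x²+y²)·(1+x²+y²)⁻¹ = 1 for all x, y. -/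
theorem nnrat_iameadow_zero :
    (∀ x y z : ℚ≥0, (x + y) + z = x + (y + z)) ∧
    (∀ x y : ℚ≥0, x + y = y + x) ∧
    (∀ x : ℚ≥0, x + 0 = x) ∧
    (∀ x y z : ℚ≥0, (x * y) * z = x * (y * z)) ∧
    (∀ x y : ℚ≥0, x * y = y * x) ∧
    (∀ x : ℚ≥0, x * 1 = x) ∧
    (∀ x y z : ℚ≥0, x * (y + z) = x * y + x * z) ∧
    (∀ x : ℚ≥0, (x⁻¹)⁻¹ = x) ∧
    (∀ x : ℚ≥0, x * (x * x⁻¹) = x) ∧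
    ((0 : ℚ≥0)⁻¹ = 0) ∧
    (∀ x y : ℚ≥0, (1 + x * x + y * y) * (1 + x * x + y * y)⁻¹ = 1) :=
  ⟨add_assoc, add_comm, add_zero, mul_assoc, mul_comm, mul_one, mul_add, inv_inv,
    fun x => mul_assoc x x x⁻¹ ▸ mul_self_mul_inv x, inv_zero,
    fun _ _ => mul_inv_cancel₀ (by positivity)⟩
end

section
/- In any inversive arithmetical meadow with zero satisfying (x·x⁻¹)·((x+y)·(x+y)⁻¹) = x·x⁻¹ for all x, y, the equation (1+x²+y²)·(1+x²+y²)⁻¹ = 1 holds for all x, y. -/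
namespace IAMeadowZero

variable {M : Type*} (A : IAMeadowZero M)

theorem one_mul (x : M) : A.mul A.one x = x :=
  (A.mul_comm A.one x).trans (A.mul_one x)

theorem one_mul_inv_one : A.mul A.one (A.inv A.one) = A.one := by
  simpa only [one_mul] using A.mul_mul_inv A.one

theorem one_add_mul_inv_one_add
    (H : ∀ x y, A.mul (A.mul x (A.inv x)) (A.mul (A.add x y) (A.inv (A.add x y))) =
        A.mul x (A.inv x)) (z : M) :
    A.mul (A.add A.one z) (A.inv (A.add A.one z)) = A.one := by
  have h := H A.one z
  rwa [one_mul_inv_one, one_mul] at h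

end IAMeadowZero

theorem one_add_sq_inv {M : Type*} (A : IAMeadowZero M)
    (H : ∀ x y, A.mul (A.mul x (A.inv x)) (A.mul (A.add x y) (A.inv (A.add x y))) =
        A.mul x (A.inv x)) (x y : M) :
    A.mul (A.add A.one (A.add (A.mul x x) (A.mul y y)))
        (A.inv (A.add A.one (A.add (A.mul x x) (A.mul y y)))) = A.one :=
  A.one_add_mul_inv_one_add H _
end

section
/- For every term t over the signature {1, +, ·, ⁻¹}, there exist terms t₁ and t₂ over the same signature in which ⁻¹ does not occur, such that t = t₁ · t₂⁻¹ is derivable in the equational theory of inversive arithmetical meadows. -/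
structure IAMeadow (M : Type*) where
  add : M → M → M
  mul : M → M → M
  one : M
  inv : M → M
  add_assoc : ∀ x y z, add (add x y) z = add x (add y z)
  add_comm : ∀ x y, add x y = add y x
  mul_assoc : ∀ x y z, mul (mul x y) z = mul x (mul y z)
  mul_comm : ∀ x y, mul x y = mul y x
  mul_one : ∀ x, mul x one = x
  mul_add : ∀ x y z, mul x (add y z) = add (mul x y) (mul x z)
  mul_inv : ∀ x, mul x (inv x) = one

inductive MTerm : Type
  | var : ℕ → MTerm
  | one : MTerm
  | add : MTerm → MTerm → MTerm
  | mul : MTerm → MTerm → MTerm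
  | inv : MTerm → MTerm

def MTerm.invFree : MTerm → Prop
  | .var _ => True
  | .one => True
  | .add s t => s.invFree ∧ t.invFree
  | .mul s t => s.invFree ∧ t.invFree
  | .inv _ => False

def MTerm.eval {M : Type*} (A : IAMeadow M) (ρ : ℕ → M) : MTerm → M
  | .var i => ρ i
  | .one => A.one
  | .add s t => A.add (s.eval A ρ) (t.eval A ρ)
  | .mul s t => A.mul (s.eval A ρ) (t.eval A ρ)
  | .inv t => A.inv (t.eval A ρ)

/-!
Because `x · x⁻¹ = 1` holds for every `x`, the multiplicative reduct of an inversive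
arithmetical meadow is a commutative group. Fractions `a · b⁻¹` therefore multiply and invert
as in any commutative group, and distributivity adds them by the usual rule
`a · b⁻¹ + c · d⁻¹ = (a · d + c · b) · (b · d)⁻¹`. Applying these rules bottom-up turns any
term into an inverse-free numerator and denominator; inversion just swaps the two.
-/

namespace IAMeadow

variable {M : Type*} (A : IAMeadow M)

abbrev toCommGroup : CommGroup M where
  mul := A.mul
  one := A.one
  inv := A.inv
  mul_assoc := A.mul_assoc
  mul_one := A.mul_one
  one_mul x := (A.mul_comm _ _).trans (A.mul_one x)
  inv_mul_cancel x := (A.mul_comm _ _).trans (A.mul_inv x)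
  mul_comm := A.mul_comm

def div (x y : M) : M := A.mul x (A.inv y)

theorem div_one (a : M) : A.div a A.one = a := by
  let := A.toCommGroup
  exact _root_.div_one a

theorem div_mul_div (a b c d : M) :
    A.mul (A.div a b) (A.div c d) = A.div (A.mul a c) (A.mul b d) := by
  let := A.toCommGroup
  exact div_mul_div_comm a b c d

theorem inv_div (a b : M) : A.inv (A.div a b) = A.div b a := by
  let := A.toCommGroup
  exact _root_.inv_div a b

theorem mul_div_mul_right (a b d : M) : A.div (A.mul a d) (A.mul b d) = A.div a b := by
  let := A.toCommGroup
  exact mul_div_mul_right_eq_div a b d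

theorem add_div (a b c : M) : A.div (A.add a b) c = A.add (A.div a c) (A.div b c) := by
  simp only [div]
  rw [A.mul_comm, A.mul_add, A.mul_comm, A.mul_comm (A.inv c)]

theorem div_add_div (a b c d : M) :
    A.add (A.div a b) (A.div c d) = A.div (A.add (A.mul a d) (A.mul c b)) (A.mul b d) := by
  rw [add_div, mul_div_mul_right, A.mul_comm b d, mul_div_mul_right]

end IAMeadow

namespace MTerm

def fraction : MTerm → MTerm × MTerm
  | var i => (var i, one)
  | one => (one, one)
  | add s t => (add (mul s.fraction.1 t.fraction.2) (mul t.fraction.1 s.fraction.2),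
      mul s.fraction.2 t.fraction.2)
  | mul s t => (mul s.fraction.1 t.fraction.1, mul s.fraction.2 t.fraction.2)
  | inv s => (s.fraction.2, s.fraction.1)

theorem invFree_fraction (t : MTerm) : t.fraction.1.invFree ∧ t.fraction.2.invFree := by
  induction t with
  | var | one => exact ⟨trivial, trivial⟩
  | add s t hs ht => exact ⟨⟨⟨hs.1, ht.2⟩, ht.1, hs.2⟩, hs.2, ht.2⟩
  | mul s t hs ht => exact ⟨⟨hs.1, ht.1⟩, hs.2, ht.2⟩
  | inv s hs => exact ⟨hs.2, hs.1⟩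

theorem eval_eq_div_fraction {M : Type*} (A : IAMeadow M) (ρ : ℕ → M) (t : MTerm) :
    t.eval A ρ = A.div (t.fraction.1.eval A ρ) (t.fraction.2.eval A ρ) := by
  induction t with
  | var | one => exact (A.div_one _).symm
  | add s t hs ht => rw [eval, hs, ht, A.div_add_div]; rfl
  | mul s t hs ht => rw [eval, hs, ht, A.div_mul_div]; rfl
  | inv s hs => rw [eval, hs, A.inv_div]; rfl

end MTerm

theorem term_inv_elimination (t : MTerm) :
    ∃ t₁ t₂ : MTerm, t₁.invFree ∧ t₂.invFree ∧
      ∀ (M : Type) (A : IAMeadow M) (ρ : ℕ → M),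
        t.eval A ρ = A.mul (t₁.eval A ρ) (A.inv (t₂.eval A ρ)) :=
  ⟨_, _, t.invFree_fraction.1, t.invFree_fraction.2, fun _ A ρ => t.eval_eq_div_fraction A ρ⟩
end

section
/- Every commutative von Neumann regular arithmetical ring with a multiplicative identity can be expanded to an inversive arithmetical meadow, and this expansion is unique: there is exactly one unary operation ⁻¹ on the carrier satisfying (x⁻¹)⁻¹ = x and x·(x·x⁻¹) = x. -/
/-!
Only the multiplicative commutative semigroup matters. Call `y` an inverse of `x` when
`x·x·y = x` and `y·y·x = y`; in a commutative semigroup an element has at most one inverse,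
and if `x·x·y = x` then `x·y·y` is an inverse of `x`. So a regular commutative semigroup has a
unique inverse map, which is involutive because inverseness is symmetric. Conversely any
operation satisfying the two meadow laws sends `x` to an inverse of `x`, hence is that map.
-/

structure ASemiring (M : Type*) where
  add : M → M → M
  mul : M → M → M
  one : M
  add_assoc : ∀ x y z, add (add x y) z = add x (add y z)
  add_comm : ∀ x y, add x y = add y x
  mul_assoc : ∀ x y z, mul (mul x y) z = mul x (mul y z)
  mul_comm : ∀ x y, mul x y = mul y x
  mul_one : ∀ x, mul x one = x
  mul_add : ∀ x y z, mul x (add y z) = add (mul x y) (mul x z)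

section CommSemigroup

variable {S : Type*} [CommSemigroup S] {x y z : S}

def IsInverse (x y : S) : Prop := x * (x * y) = x ∧ y * (y * x) = y

theorem IsInverse.symm (h : IsInverse x y) : IsInverse y x := ⟨h.2, h.1⟩

theorem IsInverse.eq_mul_mul (hy : IsInverse x y) (hz : IsInverse x z) : y = y * (x * z) :=
  calc y = y * (y * (x * (x * z))) := by rw [hz.1, hy.2]
    _ = y * (y * x) * (x * z) := by ac_rfl
    _ = y * (x * z) := by rw [hy.2]

theorem IsInverse.unique (hy : IsInverse x y) (hz : IsInverse x z) : y = z :=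
  calc y = y * (x * z) := hy.eq_mul_mul hz
    _ = z * (x * y) := by ac_rfl
    _ = z := (hz.eq_mul_mul hy).symm

theorem isInverse_mul_mul_self (h : x * (x * y) = x) : IsInverse x (x * (y * y)) := by
  constructor
  · calc x * (x * (x * (y * y))) = x * (x * y) * (x * y) := by ac_rfl
      _ = x := by rw [h, h]
  · calc x * (y * y) * (x * (y * y) * x) = x * (x * y) * (x * (y * (y * y))) := by ac_rfl
      _ = x * (x * (y * (y * y))) := by rw [h]
      _ = x * (x * y) * (y * y) := by ac_rfl
      _ = x * (y * y) := by rw [h]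

theorem existsUnique_involutive_inverse (reg : ∀ x : S, ∃ y, x * (x * y) = x) :
    ∃! inv : S → S, (∀ x, inv (inv x) = x) ∧ ∀ x, x * (x * inv x) = x := by
  choose f hf using reg
  have hinv (x : S) : IsInverse x (x * (f x * f x)) := isInverse_mul_mul_self (hf x)
  refine ⟨fun x ↦ x * (f x * f x), ⟨fun x ↦ ((hinv x).symm.unique (hinv _)).symm,
    fun x ↦ (hinv x).1⟩, ?_⟩
  rintro inv ⟨h_invol, h_mul⟩
  funext x
  have : IsInverse x (inv x) := ⟨h_mul x, by simpa only [h_invol] using h_mul (inv x)⟩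
  exact this.unique (hinv x)

end CommSemigroup

theorem regular_ring_unique_inv {M : Type*} (A : ASemiring M)
    (reg : ∀ x, ∃ y, A.mul x (A.mul x y) = x) :
    ∃! inv : M → M,
      (∀ x, inv (inv x) = x) ∧ (∀ x, A.mul x (A.mul x (inv x)) = x) :=
  letI : CommSemigroup M := { mul := A.mul, mul_assoc := A.mul_assoc, mul_comm := A.mul_comm }
  existsUnique_involutive_inverse reg
end
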